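/- If a first-order monotone boolean function f of arity k satisfies cc(f) = ∞ (π₁(tr f) has no linearly coherent subset of cardinality ≥ 2), then f is M-sequential. -/

import Mathlib

/-- The flat boolean domain: `⊥`, `tt`, `ff`. -/
abbrev Bb : Type := WithBot Bool

/-- The flat (domain) order on `Bb`: `⊥` below everything, `tt` and `ff` incomparable. -/
def bLE (a b : Bb) : Prop := a = ⊥ ∨ a = b

/-- Pointwise flat order on tuples. -/
def tupLE {k : ℕ} (x y : Fin k → Bb) : Prop := ∀ i, bLE (x i) (y i)

/-- Strict pointwise flat order on tuples. -/
def tupLT {k : ℕ} (x y : Fin k → Bb) : Prop := tupLE x y ∧ x ≠ y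

/-- A first-order boolean function is monotone for the flat order. -/
def FlatMono {k : ℕ} (f : (Fin k → Bb) → Bb) : Prop :=
  ∀ x y, tupLE x y → bLE (f x) (f y)

/-- The presequentiality relation `P^n_{A,B}` (indices `0,…,n-1`). -/
def Preseq (n : ℕ) (A B : Finset ℕ) : Set (Fin n → Bb) :=
  {d | (∃ i : Fin n, (i : ℕ) ∈ A ∧ d i = ⊥) ∨
       (∀ i j : Fin n, (i : ℕ) ∈ B → (j : ℕ) ∈ B → d i = d j)}

/-- `P^n_{m,m'}`: the presequentiality relation on initial segments. -/
def PreseqSeg (n m m' : ℕ) : Set (Fin n → Bb) :=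
  Preseq n (Finset.range m) (Finset.range m')

/-- `f` (arity `k`) is invariant under an `n`-ary relation `R`. -/
def Invariant {k n : ℕ} (f : (Fin k → Bb) → Bb) (R : Set (Fin n → Bb)) : Prop :=
  ∀ x : Fin k → Fin n → Bb, (∀ m, x m ∈ R) →
    (fun i => f (fun m => x m i)) ∈ R

/-- `π₁(tr f)`: the set of minimal points where `f` is defined. -/
def traceDom {k : ℕ} (f : (Fin k → Bb) → Bb) : Set (Fin k → Bb) :=
  {v | f v ≠ ⊥ ∧ ∀ v', tupLT v' v → f v' = ⊥}

/-- Linear coherence of a set of tuples. -/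
def LinCoherent {k : ℕ} (S : Set (Fin k → Bb)) : Prop :=
  ∀ j : Fin k, (∀ v ∈ S, v j ≠ ⊥) → ∀ v ∈ S, ∀ w ∈ S, v j = w j

/-- The coefficient of coherence `cc(f) ∈ ℕ∞`. -/
noncomputable def cc {k : ℕ} (f : (Fin k → Bb) → Bb) : ℕ∞ :=
  sInf {c : ℕ∞ | ∃ S : Finset (Fin k → Bb),
    ↑S ⊆ traceDom f ∧ 2 ≤ S.card ∧ LinCoherent (↑S : Set (Fin k → Bb)) ∧ c = (S.card : ℕ∞)}

/-- The bivalued coefficient of coherence `bcc(f) ∈ ℕ∞`. -/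
noncomputable def bcc {k : ℕ} (f : (Fin k → Bb) → Bb) : ℕ∞ :=
  sInf {c : ℕ∞ | ∃ S : Finset (Fin k → Bb),
    ↑S ⊆ traceDom f ∧ 3 ≤ S.card ∧ LinCoherent (↑S : Set (Fin k → Bb)) ∧
    (∃ v ∈ S, f v = ((true : Bool) : Bb)) ∧ (∃ v ∈ S, f v = ((false : Bool) : Bb)) ∧
    c = (S.card : ℕ∞)}

/-- M-sequentiality, by induction on the arity. -/
def MSeq : ∀ {k : ℕ}, ((Fin k → Bb) → Bb) → Prop
  | 0, f => ∃ b, ∀ x, f x = b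
  | (k+1), f => (∃ b, ∀ x, f x = b) ∨
      ∃ i : Fin (k+1), (∀ x, x i = ⊥ → f x = ⊥) ∧
        ∀ c : Bool, MSeq (fun x : Fin k → Bb => f (i.insertNth (c : Bb) x))

/-!
If some coordinate `i` is defined at every point of `π₁(tr f)`, then every point where `f` is
defined lies above a trace point, so `i` is an index of sequentiality. Fixing `x i := c` embeds
the trace of the restriction into the trace of `f`, preserving linear coherence, so each
restriction again has `cc = ∞` and we conclude by induction on the arity. Otherwise the whole
trace is (vacuously) linearly coherent, hence has at most one point; that point is `⊥` in every
coordinate, and by monotonicity `f` is constant.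
-/

lemma bLE_trans {a b c : Bb} (hab : bLE a b) (hbc : bLE b c) : bLE a c := by
  rcases hab with rfl | rfl
  · exact Or.inl rfl
  · exact hbc

lemma tupLE_refl {k : ℕ} (x : Fin k → Bb) : tupLE x x := fun _ => Or.inr rfl

lemma tupLE_trans {k : ℕ} {x y z : Fin k → Bb} (hxy : tupLE x y) (hyz : tupLE y z) :
    tupLE x z := fun i => bLE_trans (hxy i) (hyz i)

def definedCoords {k : ℕ} (x : Fin k → Bb) : Finset (Fin k) :=
  Finset.univ.filter fun i => x i ≠ ⊥

lemma definedCoords_ssubset_of_tupLT {k : ℕ} {x y : Fin k → Bb} (h : tupLT x y) :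
    definedCoords x ⊂ definedCoords y := by
  obtain ⟨hle, hne⟩ := h
  refine Finset.ssubset_iff_subset_ne.mpr ⟨fun i => ?_, fun heq => hne (funext fun i => ?_)⟩
  · simp only [definedCoords, Finset.mem_filter, Finset.mem_univ, true_and]
    rcases hle i with hx | hx
    · exact fun h => absurd hx h
    · exact fun h => hx ▸ h
  · rcases hle i with hx | hx
    · have hy : y i = ⊥ := by simpa [definedCoords, hx] using Finset.ext_iff.mp heq i
      rw [hx, hy]
    · exact hx

lemma wellFounded_tupLT (k : ℕ) : WellFounded (@tupLT k) :=
  Subrelation.wf (fun h => Finset.card_lt_card (definedCoords_ssubset_of_tupLT h))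
    (measure fun x : Fin k → Bb => (definedCoords x).card).wf

lemma exists_mem_traceDom_tupLE {k : ℕ} (f : (Fin k → Bb) → Bb) {x : Fin k → Bb}
    (hx : f x ≠ ⊥) : ∃ v ∈ traceDom f, tupLE v x := by
  obtain ⟨v, ⟨hvx, hv⟩, hmin⟩ :=
    (wellFounded_tupLT k).has_min {v | tupLE v x ∧ f v ≠ ⊥} ⟨x, tupLE_refl x, hx⟩
  refine ⟨v, ⟨hv, fun w hwv => ?_⟩, hvx⟩
  by_contra hw
  exact hmin w ⟨tupLE_trans hwv.1 hvx, hw⟩ hwv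

lemma cc_eq_top_iff {k : ℕ} (f : (Fin k → Bb) → Bb) :
    cc f = ⊤ ↔ ∀ S : Finset (Fin k → Bb), ↑S ⊆ traceDom f → 2 ≤ S.card →
      ¬ LinCoherent (↑S : Set (Fin k → Bb)) := by
  refine sInf_eq_top.trans ⟨fun h S hS hcard hcoh => ?_, ?_⟩
  · exact WithTop.natCast_ne_top S.card (h _ ⟨S, hS, hcard, hcoh, rfl⟩)
  · rintro h _ ⟨S, hS, hcard, hcoh, rfl⟩
    exact absurd hcoh (h S hS hcard)

lemma traceDom_subsingleton_of_cc_eq_top {k : ℕ} {f : (Fin k → Bb) → Bb} (hc : cc f = ⊤)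
    (hcoh : LinCoherent (traceDom f)) : (traceDom f).Subsingleton := by
  by_contra hnt
  have hfin := (traceDom f).toFinite
  refine (cc_eq_top_iff f).mp hc hfin.toFinset (by simp) ?_ (by rwa [hfin.coe_toFinset])
  exact Finset.one_lt_card_iff_nontrivial.mpr (by simpa using hnt)

lemma FlatMono.eq_of_apply_bot_ne_bot {k : ℕ} {f : (Fin k → Bb) → Bb} (hf : FlatMono f)
    (hbot : f (fun _ => ⊥) ≠ ⊥) (x : Fin k → Bb) : f x = f (fun _ => ⊥) :=
  ((hf _ x fun _ => Or.inl rfl).resolve_left hbot).symm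

lemma exists_const_of_forall_exists_traceDom_bot {k : ℕ} {f : (Fin k → Bb) → Bb}
    (hf : FlatMono f) (hc : cc f = ⊤) (hbot : ∀ i, ∃ v ∈ traceDom f, v i = ⊥) :
    ∃ b, ∀ x, f x = b := by
  have hcoh : LinCoherent (traceDom f) := fun i hi => by
    obtain ⟨v, hv, hvi⟩ := hbot i
    exact absurd hvi (hi v hv)
  rcases (traceDom_subsingleton_of_cc_eq_top hc hcoh).eq_empty_or_singleton with hT | ⟨v, hT⟩
  · refine ⟨⊥, fun x => by_contra fun hx => ?_⟩
    obtain ⟨v, hv, -⟩ := exists_mem_traceDom_tupLE f hx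
    simp [hT] at hv
  · have hv_bot : v = fun _ => ⊥ := funext fun i => by
      obtain ⟨w, hw, hwi⟩ := hbot i
      rw [hT] at hw
      rwa [← hw]
    have hv : v ∈ traceDom f := hT ▸ rfl
    exact ⟨_, hf.eq_of_apply_bot_ne_bot (hv_bot ▸ hv.1)⟩

lemma apply_eq_bot_of_forall_traceDom_ne_bot {k : ℕ} {f : (Fin k → Bb) → Bb} {i : Fin k}
    (hi : ∀ v ∈ traceDom f, v i ≠ ⊥) {x : Fin k → Bb} (hx : x i = ⊥) : f x = ⊥ := by
  by_contra hfx
  obtain ⟨v, hv, hvx⟩ := exists_mem_traceDom_tupLE f hfx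
  rcases hvx i with h | h
  · exact hi v hv h
  · exact hi v hv (h.trans hx)

section Restriction

variable {k : ℕ} (i : Fin (k + 1)) (c : Bb)

lemma tupLE_insertNth {x y : Fin k → Bb} (h : tupLE x y) :
    tupLE (i.insertNth c x) (i.insertNth c y) := fun j => by
  induction j using Fin.succAboveCases i with
  | x => simp only [Fin.insertNth_apply_same]; exact Or.inr rfl
  | p l => simpa using h l

lemma FlatMono.insertNth {f : (Fin (k + 1) → Bb) → Bb} (hf : FlatMono f) :
    FlatMono fun x => f (i.insertNth c x) :=
  fun _ _ hxy => hf _ _ (tupLE_insertNth i c hxy)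

lemma insertNth_mem_traceDom {f : (Fin (k + 1) → Bb) → Bb}
    (hbot : ∀ x, x i = ⊥ → f x = ⊥) {y : Fin k → Bb}
    (hy : y ∈ traceDom fun z => f (i.insertNth c z)) : i.insertNth c y ∈ traceDom f := by
  refine ⟨hy.1, fun x ⟨hle, hne⟩ => ?_⟩
  rcases hle i with hxi | hxi
  · exact hbot x hxi
  · rw [Fin.insertNth_apply_same] at hxi
    have hx : x = i.insertNth c (i.removeNth x) := by
      rw [← hxi, Fin.insertNth_self_removeNth]
    rw [hx] at hle hne ⊢
    exact hy.2 _ ⟨fun l => by simpa using hle (i.succAbove l), fun h => hne (h ▸ rfl)⟩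

lemma LinCoherent.image_insertNth {S : Set (Fin k → Bb)} (hS : LinCoherent S) :
    LinCoherent (i.insertNth c '' S) := by
  intro j hj
  induction j using Fin.succAboveCases i with
  | x => simp
  | p l =>
    rintro _ ⟨v, hv, rfl⟩ _ ⟨w, hw, rfl⟩
    simp only [Fin.insertNth_apply_succAbove]
    refine hS l (fun u hu => ?_) v hv w hw
    simpa using hj _ ⟨u, hu, rfl⟩

lemma cc_insertNth_eq_top {f : (Fin (k + 1) → Bb) → Bb} (hc : cc f = ⊤)
    (hbot : ∀ x, x i = ⊥ → f x = ⊥) : cc (fun x => f (i.insertNth c x)) = ⊤ := by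
  refine (cc_eq_top_iff _).mpr fun S hS hcard hcoh => ?_
  refine (cc_eq_top_iff f).mp hc (S.image (i.insertNth c)) ?_ ?_ ?_
  · simp only [Finset.coe_image, Set.image_subset_iff]
    exact fun y hy => insertNth_mem_traceDom i c hbot (hS hy)
  · rwa [Finset.card_image_of_injective _ (Fin.insertNth_right_injective _)]
  · simpa using hcoh.image_insertNth i c

end Restriction

/-- if `cc f = ∞` then `f` is M-sequential. -/
theorem stmt_15 {k : ℕ} (f : (Fin k → Bb) → Bb) (hf : FlatMono f)
    (hc : cc f = ⊤) : MSeq f := by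
  induction k with
  | zero => exact ⟨f default, fun x => congrArg f (Subsingleton.elim _ _)⟩
  | succ k ih =>
    by_cases hseq : ∃ i, ∀ v ∈ traceDom f, v i ≠ ⊥
    · obtain ⟨i, hi⟩ := hseq
      have hbot : ∀ x, x i = ⊥ → f x = ⊥ :=
        fun _ => apply_eq_bot_of_forall_traceDom_ne_bot hi
      exact Or.inr ⟨i, hbot, fun b =>
        ih _ (hf.insertNth i b) (cc_insertNth_eq_top i b hc hbot)⟩
    · push Not at hseq
      exact Or.inl (exists_const_of_forall_exists_traceDom_bot hf hc hseq)
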